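/- Let d ≥ 1 be an integer, let Φ : ℝ^d → ℝ^d be a smooth map with det DΦ(x) = 1 for every x, let a : ℝ^d → ℝ be smooth, and let Ω : ℝ^d → ℝ^d be a smooth vector field. Then for every x ∈ ℝ^d: a(x)·(div Ω)(Φ(x)) = div[ y ↦ a(y)·(DΦ(y))^{-1}·Ω(Φ(y)) ](x) − ∇a(x) · [ (DΦ(x))^{-1}·Ω(Φ(x)) ]. -/

import Mathlib

open Matrix

noncomputable section

/-- divergence of a vector field on `ℝ^d`. -/
def divg (d : ℕ) (F : (Fin d → ℝ) → (Fin d → ℝ)) (x : Fin d → ℝ) : ℝ :=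
  ∑ j, fderiv ℝ F x (Pi.single j 1) j

/-- `i`-th partial derivative. -/
def pderiv' {d : ℕ} (i : Fin d) (f : (Fin d → ℝ) → ℝ) (x : Fin d → ℝ) : ℝ :=
  fderiv ℝ f x (Pi.single i 1)

/-- the Jacobian matrix `DΦ(x)`. -/
def jac {d : ℕ} (Φ : (Fin d → ℝ) → (Fin d → ℝ)) (x : Fin d → ℝ) :
    Matrix (Fin d) (Fin d) ℝ :=
  Matrix.of fun i j => fderiv ℝ Φ x (Pi.single j 1) i

end

section Aux

variable {d : ℕ}

/-- derivative of the determinant of a matrix-valued function. -/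
lemma hasFDerivAt_det {N : (Fin d → ℝ) → Matrix (Fin d) (Fin d) ℝ}
    {N' : Fin d → Fin d → (Fin d → ℝ) →L[ℝ] ℝ} {x : Fin d → ℝ}
    (h : ∀ i l, HasFDerivAt (fun y => N y i l) (N' i l) x) :
    HasFDerivAt (fun y => (N y).det)
      (∑ σ : Equiv.Perm (Fin d), ((Equiv.Perm.sign σ : ℤ) : ℝ) •
        ∑ i, (∏ l ∈ Finset.univ.erase i, N x (σ l) l) • N' (σ i) i) x := by
  have hfun : (fun y => (N y).det) = fun y => ∑ σ : Equiv.Perm (Fin d),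
      ((Equiv.Perm.sign σ : ℤ) : ℝ) * ∏ i, N y (σ i) i := by
    funext y; exact Matrix.det_apply' (N y)
  rw [hfun]
  exact HasFDerivAt.fun_sum fun σ _ =>
    (HasFDerivAt.finset_prod (g := fun i y => N y (σ i) i)
      (g' := fun i => N' (σ i) i) (fun i _ => h (σ i) i)).const_mul _

lemma fderiv_det_apply {N : (Fin d → ℝ) → Matrix (Fin d) (Fin d) ℝ}
    {N' : Fin d → Fin d → (Fin d → ℝ) →L[ℝ] ℝ} {x : Fin d → ℝ}
    (h : ∀ i l, HasFDerivAt (fun y => N y i l) (N' i l) x) (v : Fin d → ℝ) :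
    fderiv ℝ (fun y => (N y).det) x v
      = ∑ r, ((N x).updateRow r (fun l => N' r l v)).det := by
  rw [(hasFDerivAt_det h).fderiv]
  have key : ∀ σ : Equiv.Perm (Fin d),
      ∑ r, ∏ i, ((N x).updateRow r (fun l => N' r l v)) (σ i) i
        = ∑ i, (∏ l ∈ Finset.univ.erase i, N x (σ l) l) * N' (σ i) i v := by
    intro σ
    rw [← Equiv.sum_comp σ
      (fun r => ∏ i, ((N x).updateRow r (fun l => N' r l v)) (σ i) i)]
    refine Finset.sum_congr rfl fun i₀ _ => ?_
    rw [← Finset.mul_prod_erase Finset.univ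
      (fun i => ((N x).updateRow (σ i₀) (fun l => N' (σ i₀) l v)) (σ i) i)
      (Finset.mem_univ i₀)]
    rw [Matrix.updateRow_self, mul_comm]
    congr 1
    refine Finset.prod_congr rfl fun i hi => ?_
    have hne : σ i ≠ σ i₀ := fun hc => (Finset.mem_erase.mp hi).1 (σ.injective hc)
    rw [Matrix.updateRow_ne hne]
  simp only [Matrix.det_apply']
  rw [Finset.sum_comm]
  simp only [ContinuousLinearMap.coe_sum', Finset.sum_apply, ContinuousLinearMap.coe_smul',
    Pi.smul_apply, ContinuousLinearMap.coe_smul, smul_eq_mul]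
  refine Finset.sum_congr rfl fun σ _ => ?_
  rw [← Finset.mul_sum, key σ, Finset.mul_sum]

lemma det_updateRow_finset_sum (M : Matrix (Fin d) (Fin d) ℝ) (r : Fin d)
    {ι : Type*} (s : Finset ι) (v : ι → (Fin d → ℝ)) :
    (M.updateRow r (∑ l ∈ s, v l)).det = ∑ l ∈ s, (M.updateRow r (v l)).det := by
  induction s using Finset.cons_induction with
  | empty =>
      simp only [Finset.sum_empty]
      exact Matrix.det_eq_zero_of_row_eq_zero r (fun j => by simp)
  | cons a s ha ih =>
      rw [Finset.sum_cons, Matrix.det_updateRow_add, ih, Finset.sum_cons]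

lemma det_updateRow_expand (M : Matrix (Fin d) (Fin d) ℝ) (r : Fin d) (c : Fin d → ℝ) :
    (M.updateRow r c).det = ∑ l, c l * (M.updateRow r (Pi.single l 1)).det := by
  have hc : c = ∑ l, c l • (Pi.single l 1 : Fin d → ℝ) := by
    conv_lhs => rw [← Finset.univ_sum_single c]
    refine Finset.sum_congr rfl fun l _ => ?_
    funext m
    by_cases hm : m = l
    · subst hm; simp
    · simp [Pi.single_apply, hm]
  conv_lhs => rw [hc]
  rw [det_updateRow_finset_sum]
  exact Finset.sum_congr rfl fun l _ => Matrix.det_updateRow_smul M r (c l) _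

lemma det_two_updateRow_antisym (M : Matrix (Fin d) (Fin d) ℝ) {k i : Fin d} (h : i ≠ k)
    (u w : Fin d → ℝ) :
    ((M.updateRow k u).updateRow i w).det = - ((M.updateRow k w).updateRow i u).det := by
  have hsub : (M.updateRow k u).updateRow i w
      = ((M.updateRow k w).updateRow i u).submatrix (Equiv.swap k i) id := by
    ext r c
    rcases eq_or_ne r k with rfl | hrk
    · simp [Matrix.submatrix_apply, Equiv.swap_apply_left,
        Matrix.updateRow_ne h.symm, Matrix.updateRow_self]
    rcases eq_or_ne r i with rfl | hri
    · simp [Matrix.submatrix_apply, Equiv.swap_apply_right,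
        Matrix.updateRow_ne h.symm, Matrix.updateRow_self]
    · simp [Matrix.submatrix_apply, Equiv.swap_apply_of_ne_of_ne hrk hri,
        Matrix.updateRow_ne hri, Matrix.updateRow_ne hrk]
  rw [hsub, Matrix.det_permute, Equiv.Perm.sign_swap (Ne.symm h)]
  push_cast
  ring

lemma sum_symm_antisym {S T : Fin d → Fin d → ℝ}
    (hS : ∀ j l, S j l = S l j) (hT : ∀ j l, T j l = - T l j) :
    ∑ j, ∑ l, S j l * T j l = 0 := by
  have h : (∑ j, ∑ l, S j l * T j l) = - ∑ j, ∑ l, S j l * T j l := by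
    calc ∑ j, ∑ l, S j l * T j l
        = ∑ j, ∑ l, S l j * T l j := Finset.sum_comm
      _ = ∑ j, ∑ l, -(S j l * T j l) := by
          refine Finset.sum_congr rfl fun j _ => Finset.sum_congr rfl fun l _ => ?_
          rw [hS l j, hT l j]; ring
      _ = - ∑ j, ∑ l, (S j l * T j l) := by simp
  linarith

end Aux

section Aux2

variable {d : ℕ} {Φ : (Fin d → ℝ) → (Fin d → ℝ)}

/-- the continuous linear map `L ↦ L (e l) i`. -/
noncomputable def entCLM (i l : Fin d) : ((Fin d → ℝ) →L[ℝ] (Fin d → ℝ)) →L[ℝ] ℝ :=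
  (ContinuousLinearMap.proj i).comp
    (ContinuousLinearMap.apply ℝ (Fin d → ℝ) (Pi.single l 1))

lemma hasFDerivAt_jac_entry (hΦ : ContDiff ℝ (⊤ : ℕ∞) Φ) (x : Fin d → ℝ) (i l : Fin d) :
    HasFDerivAt (fun y => jac Φ y i l)
      ((entCLM i l).comp (fderiv ℝ (fderiv ℝ Φ) x)) x := by
  have hΦ' : ContDiff ℝ (⊤ : ℕ∞) (fderiv ℝ Φ) := hΦ.fderiv_right (by simp)
  have h1 : HasFDerivAt (fderiv ℝ Φ) (fderiv ℝ (fderiv ℝ Φ) x) x :=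
    (hΦ'.differentiable (by simp) x).hasFDerivAt
  exact (entCLM i l).hasFDerivAt.comp x h1

lemma hasFDerivAt_updateRow_entry (hΦ : ContDiff ℝ (⊤ : ℕ∞) Φ) (x : Fin d → ℝ)
    (k j i l : Fin d) :
    HasFDerivAt (fun y => ((jac Φ y).updateRow k (Pi.single j 1)) i l)
      (if i = k then 0 else (entCLM i l).comp (fderiv ℝ (fderiv ℝ Φ) x)) x := by
  by_cases hik : i = k
  · subst hik
    have hfun : (fun y => ((jac Φ y).updateRow i (Pi.single j 1)) i l)
        = fun _ => (Pi.single j 1 : Fin d → ℝ) l := by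
      funext y; rw [Matrix.updateRow_self]
    rw [hfun, if_pos rfl]
    exact hasFDerivAt_const _ _
  · have hfun : (fun y => ((jac Φ y).updateRow k (Pi.single j 1)) i l)
        = fun y => jac Φ y i l := by
      funext y; rw [Matrix.updateRow_ne hik]
    rw [hfun, if_neg hik]
    exact hasFDerivAt_jac_entry hΦ x i l

lemma differentiableAt_adjugate (hΦ : ContDiff ℝ (⊤ : ℕ∞) Φ) (x : Fin d → ℝ) (j k : Fin d) :
    DifferentiableAt ℝ (fun y => (jac Φ y).adjugate j k) x := by
  have hfun : (fun y => (jac Φ y).adjugate j k)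
      = fun y => ((jac Φ y).updateRow k (Pi.single j 1)).det :=
    funext fun y => Matrix.adjugate_apply _ j k
  rw [hfun]
  exact (hasFDerivAt_det (fun i l => hasFDerivAt_updateRow_entry hΦ x k j i l)).differentiableAt

/-- Piola identity: the rows of the adjugate of the Jacobian are divergence free. -/
lemma piola (hΦ : ContDiff ℝ (⊤ : ℕ∞) Φ) (x : Fin d → ℝ) (k : Fin d) :
    ∑ j, pderiv' j (fun y => (jac Φ y).adjugate j k) x = 0 := by
  classical
  have hΦd : Differentiable ℝ Φ := hΦ.differentiable (by simp)
  have hΦ' : ContDiff ℝ (⊤ : ℕ∞) (fderiv ℝ Φ) := hΦ.fderiv_right (by simp)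
  set f'' := fderiv ℝ (fderiv ℝ Φ) x with hf''def
  have hsymm : ∀ v w, f'' v w = f'' w v :=
    second_derivative_symmetric (fun y => (hΦd y).hasFDerivAt)
      ((hΦ'.differentiable (by simp) x).hasFDerivAt)
  have step1 : ∀ j : Fin d, pderiv' j (fun y => (jac Φ y).adjugate j k) x
      = ∑ r, (((jac Φ x).updateRow k (Pi.single j 1)).updateRow r
          (fun l => (if r = k then (0 : (Fin d → ℝ) →L[ℝ] ℝ)
            else (entCLM r l).comp f'') (Pi.single j 1))).det := by
    intro j
    have hfun : (fun y => (jac Φ y).adjugate j k)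
        = fun y => ((jac Φ y).updateRow k (Pi.single j 1)).det :=
      funext fun y => Matrix.adjugate_apply _ j k
    show fderiv ℝ _ x (Pi.single j 1) = _
    rw [hfun]
    exact fderiv_det_apply (fun i l => hasFDerivAt_updateRow_entry hΦ x k j i l)
      (Pi.single j 1)
  have hk0 : ∀ j : Fin d, (((jac Φ x).updateRow k (Pi.single j 1)).updateRow k
      (fun l => (if k = k then (0 : (Fin d → ℝ) →L[ℝ] ℝ)
        else (entCLM k l).comp f'') (Pi.single j 1))).det = 0 := by
    intro j
    refine Matrix.det_eq_zero_of_row_eq_zero k fun l => ?_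
    simp
  calc ∑ j, pderiv' j (fun y => (jac Φ y).adjugate j k) x
      = ∑ j, ∑ r, (((jac Φ x).updateRow k (Pi.single j 1)).updateRow r
          (fun l => (if r = k then (0 : (Fin d → ℝ) →L[ℝ] ℝ)
            else (entCLM r l).comp f'') (Pi.single j 1))).det :=
        Finset.sum_congr rfl fun j _ => step1 j
    _ = ∑ j, ∑ r ∈ Finset.univ.erase k,
          (((jac Φ x).updateRow k (Pi.single j 1)).updateRow r
          (fun l => (if r = k then (0 : (Fin d → ℝ) →L[ℝ] ℝ)
            else (entCLM r l).comp f'') (Pi.single j 1))).det := by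
        refine Finset.sum_congr rfl fun j _ => ?_
        rw [← Finset.add_sum_erase _ _ (Finset.mem_univ k), hk0 j, zero_add]
    _ = ∑ r ∈ Finset.univ.erase k, ∑ j : Fin d,
          (((jac Φ x).updateRow k (Pi.single j 1)).updateRow r
          (fun l => (if r = k then (0 : (Fin d → ℝ) →L[ℝ] ℝ)
            else (entCLM r l).comp f'') (Pi.single j 1))).det := Finset.sum_comm
    _ = 0 := by
        refine Finset.sum_eq_zero fun r hr => ?_
        have hrk : r ≠ k := (Finset.mem_erase.mp hr).1
        have hrow : ∀ j : Fin d,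
            (((jac Φ x).updateRow k (Pi.single j 1)).updateRow r
              (fun l => (if r = k then (0 : (Fin d → ℝ) →L[ℝ] ℝ)
                else (entCLM r l).comp f'') (Pi.single j 1))).det
            = ∑ l, f'' (Pi.single j 1) (Pi.single l 1) r *
                (((jac Φ x).updateRow k (Pi.single j 1)).updateRow r (Pi.single l 1)).det := by
          intro j
          rw [show (fun l => (if r = k then (0 : (Fin d → ℝ) →L[ℝ] ℝ)
                else (entCLM r l).comp f'') (Pi.single j 1))
              = fun l => f'' (Pi.single j 1) (Pi.single l 1) r from
            funext fun l => by rw [if_neg hrk]; rfl]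
          exact det_updateRow_expand _ r _
        calc ∑ j : Fin d, (((jac Φ x).updateRow k (Pi.single j 1)).updateRow r
              (fun l => (if r = k then (0 : (Fin d → ℝ) →L[ℝ] ℝ)
                else (entCLM r l).comp f'') (Pi.single j 1))).det
            = ∑ j : Fin d, ∑ l, f'' (Pi.single j 1) (Pi.single l 1) r *
                (((jac Φ x).updateRow k (Pi.single j 1)).updateRow r (Pi.single l 1)).det :=
              Finset.sum_congr rfl fun j _ => hrow j
          _ = 0 := by
              refine sum_symm_antisym (fun j l => ?_) (fun j l => ?_)
              · exact congrFun (hsymm (Pi.single j 1) (Pi.single l 1)) r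
              · exact det_two_updateRow_antisym (jac Φ x) hrk _ _

lemma vec_expand (v : Fin d → ℝ) : v = ∑ i, v i • (Pi.single i 1 : Fin d → ℝ) := by
  conv_lhs => rw [← Finset.univ_sum_single v]
  refine Finset.sum_congr rfl fun l _ => ?_
  funext m
  by_cases hm : m = l
  · subst hm; simp
  · simp [Pi.single_apply, hm]

lemma lin_expand (L : (Fin d → ℝ) →L[ℝ] (Fin d → ℝ)) (v : Fin d → ℝ) (k : Fin d) :
    L v k = ∑ i, v i * L (Pi.single i 1) k := by
  conv_lhs => rw [vec_expand v]
  rw [map_sum, Finset.sum_apply]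
  refine Finset.sum_congr rfl fun i _ => ?_
  rw [L.map_smul]
  simp

lemma fderiv_pi_proj {F : (Fin d → ℝ) → (Fin d → ℝ)} {x v : Fin d → ℝ}
    (hF : DifferentiableAt ℝ F x) (j : Fin d) :
    fderiv ℝ (fun y => F y j) x v = fderiv ℝ F x v j := by
  have h : HasFDerivAt (fun y => F y j)
      ((ContinuousLinearMap.proj j).comp (fderiv ℝ F x)) x :=
    (ContinuousLinearMap.proj (R := ℝ) (φ := fun _ : Fin d => ℝ) j).hasFDerivAt.comp x
      hF.hasFDerivAt
  rw [h.fderiv]; rfl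

end Aux2

theorem statement9 (d : ℕ) (hd : 1 ≤ d)
    (Φ Ω : (Fin d → ℝ) → (Fin d → ℝ)) (a : (Fin d → ℝ) → ℝ)
    (hΦ : ContDiff ℝ (⊤ : ℕ∞) Φ) (hΩ : ContDiff ℝ (⊤ : ℕ∞) Ω) (ha : ContDiff ℝ (⊤ : ℕ∞) a)
    (hdet : ∀ x, (jac Φ x).det = 1) :
    ∀ x, a x * divg d Ω (Φ x)
      = divg d (fun y => a y • ((jac Φ y)⁻¹ *ᵥ Ω (Φ y))) x
        - ∑ i, pderiv' i a x * ((jac Φ x)⁻¹ *ᵥ Ω (Φ x)) i := by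
  intro x
  classical
  have hΦd : Differentiable ℝ Φ := hΦ.differentiable (by simp)
  have hΩd : Differentiable ℝ Ω := hΩ.differentiable (by simp)
  have had : Differentiable ℝ a := ha.differentiable (by simp)
  have hinv : ∀ y, (jac Φ y)⁻¹ = (jac Φ y).adjugate := fun y => by
    rw [Matrix.inv_def, hdet y, Ring.inverse_one, one_smul]
  simp only [hinv]
  -- notation
  set c : Fin d → Fin d → ℝ := fun i kk => fderiv ℝ Ω (Φ x) (Pi.single i 1) kk with hc
  -- derivative facts for Ω ∘ Φ components
  have hgk : ∀ kk : Fin d, HasFDerivAt (fun y => Ω (Φ y) kk)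
      ((ContinuousLinearMap.proj kk).comp
        ((fderiv ℝ Ω (Φ x)).comp (fderiv ℝ Φ x))) x := fun kk =>
    (ContinuousLinearMap.proj (R := ℝ) (φ := fun _ : Fin d => ℝ) kk).hasFDerivAt.comp x
      (((hΩd (Φ x)).hasFDerivAt).comp x (hΦd x).hasFDerivAt)
  have hchain : ∀ kk j : Fin d, fderiv ℝ (fun y => Ω (Φ y) kk) x (Pi.single j 1)
      = ∑ i, jac Φ x i j * c i kk := by
    intro kk j
    rw [(hgk kk).fderiv]
    show fderiv ℝ Ω (Φ x) (fderiv ℝ Φ x (Pi.single j 1)) kk = _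
    have hv : fderiv ℝ Φ x (Pi.single j 1) = fun i => jac Φ x i j := rfl
    rw [hv]
    exact lin_expand _ _ kk
  -- component functions of the new field
  have hGj : ∀ j : Fin d, DifferentiableAt ℝ
      (fun y => ∑ kk, (jac Φ y).adjugate j kk * Ω (Φ y) kk) x := fun j =>
    DifferentiableAt.fun_sum fun kk _ =>
      (differentiableAt_adjugate hΦ x j kk).mul (hgk kk).differentiableAt
  have hFcomp : ∀ j : Fin d,
      (fun y => (a y • ((jac Φ y).adjugate *ᵥ Ω (Φ y))) j)
        = fun y => a y * ∑ kk, (jac Φ y).adjugate j kk * Ω (Φ y) kk := by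
    intro j; funext y
    simp [Matrix.mulVec, dotProduct]
  have hF : DifferentiableAt ℝ (fun y => a y • ((jac Φ y).adjugate *ᵥ Ω (Φ y))) x := by
    refine differentiableAt_pi.mpr fun j => ?_
    rw [hFcomp j]
    exact (had x).mul (hGj j)
  have hmv : ∀ j : Fin d, ((jac Φ x).adjugate *ᵥ Ω (Φ x)) j
      = ∑ kk, (jac Φ x).adjugate j kk * Ω (Φ x) kk := by
    intro j; simp [Matrix.mulVec, dotProduct]
  -- divergence of the new field
  have hdiv : divg d (fun y => a y • ((jac Φ y).adjugate *ᵥ Ω (Φ y))) x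
      = ∑ j, (a x * fderiv ℝ (fun y => ∑ kk, (jac Φ y).adjugate j kk * Ω (Φ y) kk) x
            (Pi.single j 1)
          + (∑ kk, (jac Φ x).adjugate j kk * Ω (Φ x) kk) * pderiv' j a x) := by
    refine Finset.sum_congr rfl fun j _ => ?_
    rw [← fderiv_pi_proj hF j]
    rw [show (fun y => (fun y => a y • ((jac Φ y).adjugate *ᵥ Ω (Φ y))) y j)
        = fun y => a y * ∑ kk, (jac Φ y).adjugate j kk * Ω (Φ y) kk from hFcomp j]
    rw [fderiv_fun_mul (had x) (hGj j)]
    simp [pderiv']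
  -- the divergence of the Piola-transformed field
  have hkey : ∑ j, fderiv ℝ (fun y => ∑ kk, (jac Φ y).adjugate j kk * Ω (Φ y) kk) x
      (Pi.single j 1) = divg d Ω (Φ x) := by
    have hterm : ∀ j : Fin d,
        fderiv ℝ (fun y => ∑ kk, (jac Φ y).adjugate j kk * Ω (Φ y) kk) x (Pi.single j 1)
        = ∑ kk, ((jac Φ x).adjugate j kk * (∑ i, jac Φ x i j * c i kk)
            + Ω (Φ x) kk * pderiv' j (fun y => (jac Φ y).adjugate j kk) x) := by
      intro j
      rw [fderiv_fun_sum (fun kk _ =>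
        (differentiableAt_adjugate hΦ x j kk).fun_mul (hgk kk).differentiableAt)]
      rw [ContinuousLinearMap.sum_apply]
      refine Finset.sum_congr rfl fun kk _ => ?_
      rw [fderiv_fun_mul (differentiableAt_adjugate hΦ x j kk) (hgk kk).differentiableAt]
      rw [ContinuousLinearMap.add_apply, ContinuousLinearMap.smul_apply,
        ContinuousLinearMap.smul_apply, smul_eq_mul, smul_eq_mul, hchain kk j]
      rfl
    calc ∑ j, fderiv ℝ (fun y => ∑ kk, (jac Φ y).adjugate j kk * Ω (Φ y) kk) x
          (Pi.single j 1)
        = ∑ j, ∑ kk, ((jac Φ x).adjugate j kk * (∑ i, jac Φ x i j * c i kk)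
            + Ω (Φ x) kk * pderiv' j (fun y => (jac Φ y).adjugate j kk) x) :=
          Finset.sum_congr rfl fun j _ => hterm j
      _ = (∑ j, ∑ kk, (jac Φ x).adjugate j kk * (∑ i, jac Φ x i j * c i kk))
          + ∑ kk, Ω (Φ x) kk * (∑ j, pderiv' j (fun y => (jac Φ y).adjugate j kk) x) := by
          simp_rw [Finset.sum_add_distrib]
          congr 1
          rw [Finset.sum_comm]
          exact Finset.sum_congr rfl fun kk _ => by rw [← Finset.mul_sum]
      _ = ∑ j, ∑ kk, (jac Φ x).adjugate j kk * (∑ i, jac Φ x i j * c i kk) := by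
          have : ∀ kk : Fin d,
              Ω (Φ x) kk * (∑ j, pderiv' j (fun y => (jac Φ y).adjugate j kk) x) = 0 :=
            fun kk => by rw [piola hΦ x kk, mul_zero]
          rw [Finset.sum_congr rfl fun kk _ => this kk, Finset.sum_const_zero, add_zero]
      _ = ∑ kk, ∑ i, c i kk * (∑ j, jac Φ x i j * (jac Φ x).adjugate j kk) := by
          simp_rw [Finset.mul_sum]
          rw [Finset.sum_comm]
          refine Finset.sum_congr rfl fun kk _ => ?_
          rw [Finset.sum_comm]
          exact Finset.sum_congr rfl fun i _ => Finset.sum_congr rfl fun j _ => by ring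
      _ = ∑ kk, ∑ i, c i kk * (if i = kk then 1 else 0) := by
          refine Finset.sum_congr rfl fun kk _ => Finset.sum_congr rfl fun i _ => ?_
          congr 1
          have : ∑ j, jac Φ x i j * (jac Φ x).adjugate j kk
              = (jac Φ x * (jac Φ x).adjugate) i kk := (Matrix.mul_apply).symm
          rw [this, Matrix.mul_adjugate, hdet x, one_smul, Matrix.one_apply]
      _ = ∑ kk, c kk kk := by
          refine Finset.sum_congr rfl fun kk _ => ?_
          simp
      _ = divg d Ω (Φ x) := rfl
  have hlast : ∑ i, pderiv' i a x * ((jac Φ x).adjugate *ᵥ Ω (Φ x)) i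
      = ∑ j, (∑ kk, (jac Φ x).adjugate j kk * Ω (Φ x) kk) * pderiv' j a x :=
    Finset.sum_congr rfl fun i _ => by rw [hmv i, mul_comm]
  rw [hdiv, hlast, Finset.sum_add_distrib, ← Finset.mul_sum, hkey]
  ring
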